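/- Let f : ℝⁿ → ℝ be convex, L an affine subspace of ℝⁿ containing x, and suppose the restriction f|_L is differentiable at x. Let y ∈ L and c ∈ ∂f(x) with cᵀ(y − x) < 0. Then d = y − x is a descent direction of f at x, i.e., the directional derivative of f at x in direction d is negative. -/
import Mathlib


open Matrix

/-- If `f|_L` is differentiable at `x ∈ L`, `y ∈ L`, and `c ∈ ∂f(x)` with
`cᵀ(y − x) < 0`, then `y − x` is a descent direction of `f` at `x`:
the directional derivative `φ(y − x)` is negative. Here `φ d` denotes the one-sided
directional derivative of `f` at `x` in direction `d`, and differentiability of `f|_L`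
at `x` means `φ d = −φ(−d)` for all `d` parallel to `L`. -/
theorem stmt7 {n : ℕ} (f : (Fin n → ℝ) → ℝ) (hf : ConvexOn ℝ Set.univ f)
    (L : AffineSubspace ℝ (Fin n → ℝ)) (x y c : Fin n → ℝ)
    (hx : x ∈ L) (hy : y ∈ L)
    (φ : (Fin n → ℝ) → ℝ)
    (hφ : ∀ d : Fin n → ℝ, Filter.Tendsto
      (fun t : ℝ => (f (x + t • d) - f x) / t)
      (nhdsWithin 0 (Set.Ioi 0)) (nhds (φ d)))
    (hdiff : ∀ d ∈ L.direction, φ d = - φ (-d))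
    (hsub : ∀ z : Fin n → ℝ, f z ≥ f x + c ⬝ᵥ (z - x))
    (hneg : c ⬝ᵥ (y - x) < 0) :
    φ (y - x) < 0 := by
  set d := y - x with hd
  have hdL : d ∈ L.direction := by
    simpa using AffineSubspace.vsub_mem_direction hy hx
  have hkey : -(c ⬝ᵥ d) ≤ φ (-d) := by
    refine ge_of_tendsto (hφ (-d)) ?_
    filter_upwards [self_mem_nhdsWithin] with t (ht : t ∈ Set.Ioi 0)
    have ht0 : (0:ℝ) < t := ht
    have h1 := hsub (x + t • (-d))
    have h2 : x + t • (-d) - x = t • (-d) := by abel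
    rw [h2] at h1
    have h3 : c ⬝ᵥ (t • (-d)) = t * (c ⬝ᵥ (-d)) := by
      simp [dotProduct_smul, smul_eq_mul]
    have h4 : t * (c ⬝ᵥ (-d)) ≤ f (x + t • (-d)) - f x := by linarith [h1, h3.symm.le]
    have : c ⬝ᵥ (-d) ≤ (f (x + t • (-d)) - f x) / t := by
      rw [le_div_iff₀ ht0]
      linarith [h4]
    simpa [dotProduct_neg] using this
  have hpos : 0 < φ (-d) := lt_of_lt_of_le (by linarith) hkey
  rw [hdiff d hdL]
  linarith
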